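/- Let A₁, A₂ be matrices on ℂᵈ, let w₀, w₁, ..., w_{d-1} be an orthonormal basis of ℂᵈ, and let V ⊆ ℂᵈ be a subspace invariant under both A₁ and A₂ with V orthogonal to w₀. Suppose that for every k ∈ {1,...,d-1} there exist j < k and i ∈ {1,2} with ⟨w_j| A_i |w_k⟩ ≠ 0 while ⟨w_j| A_i |w_l⟩ = 0 for all l > k. Then V = {0}. -/
import Mathlib


open Matrix

/-- Cascading orthogonality: if a subspace `V` is invariant under `A₁, A₂`,
orthogonal to `w 0`, and for every `k ≠ 0` there are `j < k` and `i` with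
`⟨w j| A i |w k⟩ ≠ 0` while `⟨w j| A i |w l⟩ = 0` for all `l > k`, then `V = 0`. -/
theorem stmt16 {d : ℕ} (hd : 0 < d)
    (w : Fin d → (Fin d → ℂ))
    (hw : ∀ j k : Fin d, star (w j) ⬝ᵥ w k = if j = k then 1 else 0)
    (A : Fin 2 → Matrix (Fin d) (Fin d) ℂ)
    (V : Submodule ℂ (Fin d → ℂ))
    (hinv : ∀ i : Fin 2, ∀ x ∈ V, (A i) *ᵥ x ∈ V)
    (hperp : ∀ x ∈ V, star (w ⟨0, hd⟩) ⬝ᵥ x = 0)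
    (hchain : ∀ k : Fin d, k ≠ ⟨0, hd⟩ →
      ∃ j : Fin d, j < k ∧ ∃ i : Fin 2,
        star (w j) ⬝ᵥ ((A i) *ᵥ w k) ≠ 0 ∧
        ∀ l : Fin d, k < l → star (w j) ⬝ᵥ ((A i) *ᵥ w l) = 0) :
    V = ⊥ := by
  classical
  -- dot product commutes with finite sums and scalars
  have hds : ∀ (v : Fin d → ℂ) (s : Finset (Fin d)) (f : Fin d → Fin d → ℂ),
      v ⬝ᵥ (∑ l ∈ s, f l) = ∑ l ∈ s, v ⬝ᵥ f l := by
    intro v s f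
    simp only [dotProduct, Finset.sum_apply, Finset.mul_sum]
    rw [Finset.sum_comm]
  have hdsm : ∀ (v u : Fin d → ℂ) (c : ℂ), v ⬝ᵥ (c • u) = c * (v ⬝ᵥ u) := by
    intro v u c
    simp [dotProduct, Finset.mul_sum, mul_comm, mul_left_comm]
  have hmv : ∀ (i : Fin 2) (s : Finset (Fin d)) (f : Fin d → Fin d → ℂ),
      (A i) *ᵥ (∑ l ∈ s, f l) = ∑ l ∈ s, (A i) *ᵥ f l := by
    intro i s f
    ext r
    simp only [mulVec, dotProduct, Finset.sum_apply, Finset.mul_sum]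
    rw [Finset.sum_comm]
  have hnonempty : Nonempty (Fin d) := ⟨⟨0, hd⟩⟩
  -- w is linearly independent
  have hli : LinearIndependent ℂ w := by
    rw [linearIndependent_iff']
    intro s g hg m hm
    have h := congrArg (fun v => star (w m) ⬝ᵥ v) hg
    simp only [dotProduct_zero, hds, hdsm, hw] at h
    simpa [Finset.sum_ite_eq, hm] using h
  have hcard : Fintype.card (Fin d) = Module.finrank ℂ (Fin d → ℂ) := by
    simp
  set B := basisOfLinearIndependentOfCardEqFinrank hli hcard with hBdef
  have hB : ⇑B = w := coe_basisOfLinearIndependentOfCardEqFinrank hli hcard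
  -- coordinates with respect to B are dot products with w
  have coord : ∀ (x : Fin d → ℂ) (m : Fin d), star (w m) ⬝ᵥ x = B.repr x m := by
    intro x m
    conv_lhs => rw [← B.sum_repr x]
    simp only [hB, hds, hdsm, hw]
    simp [Finset.sum_ite_eq]
  -- main claim by strong induction on k
  have main : ∀ n : ℕ, ∀ k : Fin d, (k : ℕ) = n → ∀ x ∈ V, star (w k) ⬝ᵥ x = 0 := by
    intro n
    induction n using Nat.strong_induction_on with
    | _ n ih =>
      intro k hkn x hx
      by_cases hk0 : k = ⟨0, hd⟩
      · subst hk0; exact hperp x hx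
      · obtain ⟨j, hjk, i, hjne, hz⟩ := hchain k hk0
        have h1 : star (w j) ⬝ᵥ ((A i) *ᵥ x) = 0 := by
          refine ih (j : ℕ) ?_ j rfl _ (hinv i x hx)
          rw [← hkn]; exact hjk
        have hxex : (A i) *ᵥ x = ∑ l, B.repr x l • ((A i) *ᵥ w l) := by
          conv_lhs => rw [← B.sum_repr x, hB]
          rw [hmv]
          exact Finset.sum_congr rfl fun l _ => (mulVec_smul (A i) _ _)
        rw [hxex, hds] at h1
        simp only [hdsm] at h1
        have h2 : ∀ l : Fin d, l ∈ Finset.univ → l ≠ k →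
            B.repr x l * (star (w j) ⬝ᵥ ((A i) *ᵥ w l)) = 0 := by
          intro l _ hl
          rcases lt_or_gt_of_ne hl with h | h
          · have hl0 : star (w l) ⬝ᵥ x = 0 := by
              refine ih (l : ℕ) ?_ l rfl x hx
              rw [← hkn]; exact h
            rw [coord] at hl0
            rw [hl0, zero_mul]
          · rw [hz l h, mul_zero]
        rw [Finset.sum_eq_single_of_mem k (Finset.mem_univ k) h2] at h1
        rw [coord x k]
        rcases mul_eq_zero.mp h1 with h | h
        · exact h
        · exact absurd h hjne
  -- conclude V = ⊥
  rw [eq_bot_iff]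
  intro x hx
  simp only [Submodule.mem_bot]
  have hall : ∀ m : Fin d, B.repr x m = 0 := by
    intro m
    rw [← coord]
    exact main (m : ℕ) m rfl x hx
  calc x = ∑ l, B.repr x l • B l := (B.sum_repr x).symm
    _ = 0 := by simp [hall]
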